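/- For all λ₁, λ₂ > 0, the invariant metric P = λ₁·Id_{𝔫₁} ⊕ λ₂·Id_{𝔫₂} on 𝔫 satisfies scal_N(P) = 1/λ₁ + 1/λ₂; equivalently, the normalized scalar curvature det(P)^{1/4}·scal_N(P) equals (λ₁λ₂)^{1/2}·(1/λ₁ + 1/λ₂). In particular, the normal metric P = Id_𝔫 satisfies Ric_N(Id_𝔫) = (1/2)·Id_𝔫, i.e. it is Einstein. -/

import Mathlib

noncomputable section

open Matrix

/-- `4×4` real matrices, the ambient space of `𝔰𝔬(4)`. -/
abbrev M4 := Matrix (Fin 4) (Fin 4) ℝ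

/-- The ad-invariant inner product `Q(X,Y) = -2·Tr(XY)` on `𝔰𝔬(4)`
(the negative of the Killing form). -/
def Q4 (X Y : M4) : ℝ := -2 * Matrix.trace (X * Y)

/-- elementary matrices -/
def E4 (i j : Fin 4) : M4 := Matrix.single i j 1

/-- first basis vector of `𝔨 = Lie(T²)` -/
def k1 : M4 := E4 0 1 - E4 1 0
/-- second basis vector of `𝔨 = Lie(T²)` -/
def k2 : M4 := E4 2 3 - E4 3 2
/-- first basis vector of `𝔫₁` -/
def u1 : M4 := (E4 0 2 - E4 2 0) - (E4 1 3 - E4 3 1)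
/-- second basis vector of `𝔫₁` -/
def u2 : M4 := (E4 0 3 - E4 3 0) + (E4 1 2 - E4 2 1)
/-- first basis vector of `𝔫₂` -/
def v1 : M4 := (E4 0 2 - E4 2 0) + (E4 1 3 - E4 3 1)
/-- second basis vector of `𝔫₂` -/
def v2 : M4 := (E4 0 3 - E4 3 0) - (E4 1 2 - E4 2 1)

/-- The horizontal space `𝔫 = 𝔫₁ ⊕ 𝔫₂`, the `Q`-orthogonal complement of `𝔨` in `𝔰𝔬(4)`. -/
def n4 : Submodule ℝ M4 := Submodule.span ℝ {u1, u2, v1, v2}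

/-- The `Q`-orthogonal basis `(u1, u2, v1, v2)` of `𝔫`; each vector has `Q`-norm² `8`. -/
def bN4 : Fin 4 → M4 := ![u1, u2, v1, v2]

/-- The `Q`-orthogonal projection of `𝔰𝔬(4)` onto `𝔨` (the vectors `k1, k2` have
`Q`-norm² `4`). -/
def projK4 (X : M4) : M4 := (Q4 X k1 / 4) • k1 + (Q4 X k2 / 4) • k2

/-- The `Q`-orthogonal projection of `𝔰𝔬(4)` onto `𝔫`. -/
def projN4 (X : M4) : M4 :=
  (Q4 X u1 / 8) • u1 + (Q4 X u2 / 8) • u2 + (Q4 X v1 / 8) • v1 + (Q4 X v2 / 8) • v2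

/-- The invariant metric `P = λ₁·Id_{𝔫₁} ⊕ λ₂·Id_{𝔫₂}` on `𝔫`. -/
def P4 (l1 l2 : ℝ) (X : M4) : M4 :=
  l1 • ((Q4 X u1 / 8) • u1 + (Q4 X u2 / 8) • u2)
    + l2 • ((Q4 X v1 / 8) • v1 + (Q4 X v2 / 8) • v2)

/-- The curvature `Rm_N(X,Y).W = ad([X,Y]_𝔨).W - [S_N(X),S_N(Y)].W - S_N([X,Y]_𝔫).W`
of `SO(4)/T²`, relative to the operator `SN = S_N(P)`. -/
def RmN4 (SN : M4 → M4 → M4) (X Y W : M4) : M4 :=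
  ⁅projK4 ⁅X, Y⁆, W⁆ - (SN X (SN Y W) - SN Y (SN X W)) - SN (projN4 ⁅X, Y⁆) W

/-!
`𝔫` consists of the matrices that are off-diagonal for the block splitting `4 = 2 + 2`, and the
bracket of two such matrices is block diagonal: `[𝔫, 𝔫] ⊆ 𝔨`, i.e. `SO(4)/T² = S² × S²` is a
symmetric space. Hence every `𝔫`-component of a bracket of elements of `𝔫` vanishes, so
`S_N(P) = 0` for every `P` and the curvature is `Rm_N(X, Y) = ad [X, Y]`. By ad-invariance of `Q`
the Ricci endomorphism is then `-(1/8) ∑ᵢ ad(bᵢ)²` on `𝔫`, which a direct computation in the basis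
shows to be `1/2`. Finally `scal_N(P) = Tr(P⁻¹)/2 = 1/λ₁ + 1/λ₂`.
-/

open Finset

lemma Q4_comm (X Y : M4) : Q4 X Y = Q4 Y X := by
  rw [Q4, Q4, trace_mul_comm]

lemma Q4_add_left (X Y Z : M4) : Q4 (X + Y) Z = Q4 X Z + Q4 Y Z := by
  simp only [Q4, add_mul, trace_add]; ring

lemma Q4_smul_left (c : ℝ) (X Y : M4) : Q4 (c • X) Y = c * Q4 X Y := by
  simp only [Q4, smul_mul, trace_smul, smul_eq_mul]; ring

lemma Q4_sum_right {ι : Type*} (s : Finset ι) (X : M4) (Y : ι → M4) :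
    Q4 X (∑ i ∈ s, Y i) = ∑ i ∈ s, Q4 X (Y i) := by
  simp only [Q4, Finset.mul_sum, trace_sum]

lemma Q4_lie_left (A B C : M4) : Q4 ⁅A, B⁆ C = -Q4 B ⁅A, C⁆ := by
  simp only [Q4, Ring.lie_def, sub_mul, mul_sub, ← Matrix.mul_assoc, trace_sub,
    trace_mul_cycle B C A]
  ring

lemma P4_smul (m1 m2 c : ℝ) (X : M4) : P4 m1 m2 (c • X) = c • P4 m1 m2 X := by
  simp only [P4, Q4_smul_left]; module

lemma projN4_add (X Y : M4) : projN4 (X + Y) = projN4 X + projN4 Y := by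
  simp only [projN4, Q4_add_left]; module

lemma projN4_smul (c : ℝ) (X : M4) : projN4 (c • X) = c • projN4 X := by
  simp only [projN4, Q4_smul_left]; module

lemma projK4_add (X Y : M4) : projK4 (X + Y) = projK4 X + projK4 Y := by
  simp only [projK4, Q4_add_left]; module

lemma projK4_smul (c : ℝ) (X : M4) : projK4 (c • X) = c • projK4 X := by
  simp only [projK4, Q4_smul_left]; module

lemma u1_eq_matrix : u1 = !![0, 0, 1, 0; 0, 0, 0, -1; -1, 0, 0, 0; 0, 1, 0, 0] := by
  ext i j; fin_cases i <;> fin_cases j <;> simp [u1, E4]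

lemma u2_eq_matrix : u2 = !![0, 0, 0, 1; 0, 0, 1, 0; 0, -1, 0, 0; -1, 0, 0, 0] := by
  ext i j; fin_cases i <;> fin_cases j <;> simp [u2, E4]

lemma v1_eq_matrix : v1 = !![0, 0, 1, 0; 0, 0, 0, 1; -1, 0, 0, 0; 0, -1, 0, 0] := by
  ext i j; fin_cases i <;> fin_cases j <;> simp [v1, E4]

lemma v2_eq_matrix : v2 = !![0, 0, 0, 1; 0, 0, -1, 0; 0, 1, 0, 0; -1, 0, 0, 0] := by
  ext i j; fin_cases i <;> fin_cases j <;> simp [v2, E4]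

lemma k1_eq_matrix : k1 = !![0, 1, 0, 0; -1, 0, 0, 0; 0, 0, 0, 0; 0, 0, 0, 0] := by
  ext i j; fin_cases i <;> fin_cases j <;> simp [k1, E4]

lemma k2_eq_matrix : k2 = !![0, 0, 0, 0; 0, 0, 0, 0; 0, 0, 0, 1; 0, 0, -1, 0] := by
  ext i j; fin_cases i <;> fin_cases j <;> simp [k2, E4]

lemma Q4_bN4 (i j : Fin 4) : Q4 (bN4 i) (bN4 j) = if i = j then 8 else 0 := by
  fin_cases i <;> fin_cases j <;>
    simp [bN4, Q4, u1_eq_matrix, u2_eq_matrix, v1_eq_matrix, v2_eq_matrix, trace,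
      Fin.sum_univ_four] <;> norm_num

lemma Q4_k1_bN4 (j : Fin 4) : Q4 k1 (bN4 j) = 0 := by
  fin_cases j <;>
    simp [bN4, Q4, k1_eq_matrix, u1_eq_matrix, u2_eq_matrix, v1_eq_matrix, v2_eq_matrix, trace,
      Fin.sum_univ_four]

lemma Q4_k2_bN4 (j : Fin 4) : Q4 k2 (bN4 j) = 0 := by
  fin_cases j <;>
    simp [bN4, Q4, k2_eq_matrix, u1_eq_matrix, u2_eq_matrix, v1_eq_matrix, v2_eq_matrix, trace,
      Fin.sum_univ_four]

lemma projK4_k1 : projK4 k1 = k1 := by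
  simp [projK4, Q4, k1_eq_matrix, k2_eq_matrix, trace, Fin.sum_univ_four]; norm_num

lemma projK4_k2 : projK4 k2 = k2 := by
  simp [projK4, Q4, k1_eq_matrix, k2_eq_matrix, trace, Fin.sum_univ_four]; norm_num

lemma projK4_lie_bN4 (i j : Fin 4) : projK4 ⁅bN4 i, bN4 j⁆ = ⁅bN4 i, bN4 j⁆ := by
  fin_cases i <;> fin_cases j <;>
    simp [projK4, bN4, Q4, Ring.lie_def, k1_eq_matrix, k2_eq_matrix, u1_eq_matrix, u2_eq_matrix,
      v1_eq_matrix, v2_eq_matrix, trace, Fin.sum_univ_four] <;> norm_num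

lemma sum_lie_lie_bN4_bN4 (j : Fin 4) : ∑ i, ⁅⁅bN4 j, bN4 i⁆, bN4 i⁆ = (-4 : ℝ) • bN4 j := by
  fin_cases j <;>
    simp [bN4, Fin.sum_univ_four, Ring.lie_def, u1_eq_matrix, u2_eq_matrix, v1_eq_matrix,
      v2_eq_matrix] <;> norm_num

lemma sum_Q4_P4_bN4 (m1 m2 : ℝ) : ∑ i, Q4 (P4 m1 m2 (bN4 i)) (bN4 i) = 16 * (m1 + m2) := by
  simp [bN4, Fin.sum_univ_four, P4, Q4, trace, u1_eq_matrix, u2_eq_matrix, v1_eq_matrix,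
    v2_eq_matrix]
  ring

def k4 : Submodule ℝ M4 := Submodule.span ℝ {k1, k2}

lemma range_bN4 : Set.range bN4 = {u1, u2, v1, v2} := by
  ext; simp [bN4]; tauto

lemma bN4_mem (i : Fin 4) : bN4 i ∈ n4 := by
  rw [n4, ← range_bN4]; exact Submodule.subset_span ⟨i, rfl⟩

lemma P4_mem (m1 m2 : ℝ) (X : M4) : P4 m1 m2 X ∈ n4 := by
  have hb := bN4_mem
  exact add_mem
    (n4.smul_mem _ (add_mem (n4.smul_mem _ (hb 0)) (n4.smul_mem _ (hb 1))))
    (n4.smul_mem _ (add_mem (n4.smul_mem _ (hb 2)) (n4.smul_mem _ (hb 3))))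

lemma projK4_mem (X : M4) : projK4 X ∈ k4 :=
  add_mem (Submodule.smul_mem _ _ (Submodule.subset_span (by simp)))
    (Submodule.smul_mem _ _ (Submodule.subset_span (by simp)))

lemma projN4_eq_sum (X : M4) : projN4 X = ∑ k, (Q4 X (bN4 k) / 8) • bN4 k := by
  simp [projN4, bN4, Fin.sum_univ_four]

lemma projN4_eq_self_of_mem_n4 {X : M4} (hX : X ∈ n4) : projN4 X = X := by
  rw [n4, ← range_bN4] at hX
  induction hX using Submodule.span_induction with
  | mem x hx =>
    obtain ⟨i, rfl⟩ := hx
    simp [projN4_eq_sum, Q4_bN4, ite_div]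
  | zero => simp [projN4, Q4]
  | add x y _ _ hx hy => rw [projN4_add, hx, hy]
  | smul c x _ hx => rw [projN4_smul, hx]

lemma n4_ext {X Y : M4} (hX : X ∈ n4) (hY : Y ∈ n4) (h : ∀ k, Q4 X (bN4 k) = Q4 Y (bN4 k)) :
    X = Y := by
  rw [← projN4_eq_self_of_mem_n4 hX, ← projN4_eq_self_of_mem_n4 hY, projN4_eq_sum,
    projN4_eq_sum]
  simp only [h]

lemma projK4_eq_self_of_mem_k4 {X : M4} (hX : X ∈ k4) : projK4 X = X := by
  obtain ⟨a, b, rfl⟩ := Submodule.mem_span_pair.mp hX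
  rw [projK4_add, projK4_smul, projK4_smul, projK4_k1, projK4_k2]

lemma projN4_eq_zero_of_mem_k4 {X : M4} (hX : X ∈ k4) : projN4 X = 0 := by
  obtain ⟨a, b, rfl⟩ := Submodule.mem_span_pair.mp hX
  simp [projN4_eq_sum, Q4_add_left, Q4_smul_left, Q4_k1_bN4, Q4_k2_bN4]

section
attribute [local instance] LieRing.ofAssociativeRing

lemma lie_mem_k4 {X Y : M4} (hX : X ∈ n4) (hY : Y ∈ n4) : ⁅X, Y⁆ ∈ k4 := by
  have : Submodule.map₂ (LieModule.toEnd ℝ M4 M4 : M4 →ₗ[ℝ] M4 →ₗ[ℝ] M4) n4 n4 ≤ k4 := by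
    rw [n4, ← range_bN4, Submodule.map₂_span_span, Submodule.span_le]
    rintro _ ⟨_, ⟨i, rfl⟩, _, ⟨j, rfl⟩, rfl⟩
    show ⁅bN4 i, bN4 j⁆ ∈ k4
    rw [← projK4_lie_bN4]
    exact projK4_mem _
  exact this (Submodule.apply_mem_map₂ _ hX hY)

lemma sum_lie_lie_bN4 {X : M4} (hX : X ∈ n4) : ∑ i, ⁅⁅X, bN4 i⁆, bN4 i⁆ = (-4 : ℝ) • X := by
  rw [n4, ← range_bN4] at hX
  induction hX using Submodule.span_induction with
  | mem x hx =>
    obtain ⟨j, rfl⟩ := hx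
    exact sum_lie_lie_bN4_bN4 j
  | zero => simp
  | add x y _ _ hx hy => simp only [add_lie, sum_add_distrib, hx, hy, smul_add]
  | smul c x _ hx => simp only [smul_lie, ← smul_sum, hx, smul_comm c]

end

lemma SN_eq_zero {l1 l2 : ℝ} {SN : M4 → M4 → M4}
    (hSNmem : ∀ X ∈ n4, ∀ Y ∈ n4, SN X Y ∈ n4)
    (hSNimp : ∀ X ∈ n4, ∀ Y ∈ n4, ∀ Z ∈ n4,
      (-2 : ℝ) * Q4 (SN X Y) Z =
        Q4 (projN4 ⁅X, Y⁆) Z + Q4 (projN4 ⁅P4 l1⁻¹ l2⁻¹ Z, X⁆) (P4 l1 l2 Y)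
          + Q4 (projN4 ⁅P4 l1⁻¹ l2⁻¹ Z, Y⁆) (P4 l1 l2 X))
    {X Y : M4} (hX : X ∈ n4) (hY : Y ∈ n4) : SN X Y = 0 := by
  refine n4_ext (hSNmem X hX Y hY) (zero_mem _) fun k => ?_
  have h := hSNimp X hX Y hY (bN4 k) (bN4_mem k)
  rw [projN4_eq_zero_of_mem_k4 (lie_mem_k4 hX hY),
    projN4_eq_zero_of_mem_k4 (lie_mem_k4 (P4_mem _ _ _) hX),
    projN4_eq_zero_of_mem_k4 (lie_mem_k4 (P4_mem _ _ _) hY)] at h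
  simp only [Q4, zero_mul, trace_zero] at h ⊢
  linarith

lemma RmN4_eq_lie_lie {SN : M4 → M4 → M4} (hSN : ∀ X ∈ n4, ∀ Y ∈ n4, SN X Y = 0)
    {X Y W : M4} (hX : X ∈ n4) (hY : Y ∈ n4) (hW : W ∈ n4) :
    RmN4 SN X Y W = ⁅⁅X, Y⁆, W⁆ := by
  rw [RmN4, projK4_eq_self_of_mem_k4 (lie_mem_k4 hX hY),
    projN4_eq_zero_of_mem_k4 (lie_mem_k4 hX hY),
    hSN Y hY W hW, hSN X hX W hW, hSN X hX 0 (zero_mem _), hSN Y hY 0 (zero_mem _),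
    hSN 0 (zero_mem _) W hW, sub_self, sub_zero, sub_zero]

lemma RicN_eq_half_smul {SN : M4 → M4 → M4} (hSN : ∀ X ∈ n4, ∀ Y ∈ n4, SN X Y = 0)
    {RicN : M4 → M4} (hRicNmem : ∀ X ∈ n4, RicN X ∈ n4)
    (hRicNchar : ∀ X ∈ n4, ∀ Y ∈ n4,
      Q4 (RicN X) Y = (1 / 8) * ∑ i, Q4 (RmN4 SN X (bN4 i) Y) (bN4 i))
    {X : M4} (hX : X ∈ n4) : RicN X = (1 / 2 : ℝ) • X := by
  refine n4_ext (hRicNmem X hX) (Submodule.smul_mem _ _ hX) fun k => ?_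
  calc Q4 (RicN X) (bN4 k)
      = (1 / 8) * ∑ i, -Q4 (bN4 k) ⁅⁅X, bN4 i⁆, bN4 i⁆ := by
        rw [hRicNchar X hX _ (bN4_mem k)]
        congr 1
        refine sum_congr rfl fun i _ => ?_
        rw [RmN4_eq_lie_lie hSN hX (bN4_mem i) (bN4_mem k), Q4_lie_left]
    _ = (1 / 8) * -Q4 (bN4 k) ((-4 : ℝ) • X) := by
        rw [sum_neg_distrib, ← Q4_sum_right, sum_lie_lie_bN4 hX]
    _ = Q4 ((1 / 2 : ℝ) • X) (bN4 k) := by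
        rw [Q4_comm (bN4 k), Q4_smul_left, Q4_smul_left]; ring

/-- for `λ₁, λ₂ > 0`, the invariant metric `P = λ₁·Id_{𝔫₁} ⊕ λ₂·Id_{𝔫₂}` on
`N = SO(4)/T² = S² × S²` satisfies `scal_N(P) = 1/λ₁ + 1/λ₂`; equivalently
`det(P)^{1/4}·scal_N(P) = (λ₁λ₂)^{1/2}(1/λ₁ + 1/λ₂)`.  In particular the normal metric
(`λ₁ = λ₂ = 1`) satisfies `Ric_N(Id_𝔫) = (1/2)·Id_𝔫`, i.e. it is Einstein.  Here `SN` is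
the operator `S_N(P)` (defined by its implicit equation), `RicN` is the Ricci endomorphism
of `P` (defined through the trace of the curvature, computed in the `Q`-orthogonal basis
`bN4` of norm² `8`), and `scal_N(P) = Tr(P⁻¹.Ric_N(P))`. -/
theorem scal_SO4_mod_torus (l1 l2 : ℝ) (h1 : 0 < l1) (h2 : 0 < l2)
    (SN : M4 → M4 → M4)
    (hSNmem : ∀ X ∈ n4, ∀ Y ∈ n4, SN X Y ∈ n4)
    (hSNimp : ∀ X ∈ n4, ∀ Y ∈ n4, ∀ Z ∈ n4,
      (-2 : ℝ) * Q4 (SN X Y) Z =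
        Q4 (projN4 ⁅X, Y⁆) Z + Q4 (projN4 ⁅P4 l1⁻¹ l2⁻¹ Z, X⁆) (P4 l1 l2 Y)
          + Q4 (projN4 ⁅P4 l1⁻¹ l2⁻¹ Z, Y⁆) (P4 l1 l2 X))
    (RicN : M4 → M4)
    (hRicNmem : ∀ X ∈ n4, RicN X ∈ n4)
    (hRicNchar : ∀ X ∈ n4, ∀ Y ∈ n4,
      Q4 (RicN X) Y = (1 / 8) * ∑ i, Q4 (RmN4 SN X (bN4 i) Y) (bN4 i)) :
    (1 / 8) * (∑ i, Q4 (P4 l1⁻¹ l2⁻¹ (RicN (bN4 i))) (bN4 i)) = 1 / l1 + 1 / l2 ∧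
    ((l1 * l2) ^ (2 : ℕ)) ^ ((1 : ℝ) / 4) *
        ((1 / 8) * (∑ i, Q4 (P4 l1⁻¹ l2⁻¹ (RicN (bN4 i))) (bN4 i))) =
      (l1 * l2) ^ ((1 : ℝ) / 2) * (1 / l1 + 1 / l2) ∧
    (l1 = 1 → l2 = 1 → ∀ X ∈ n4, RicN X = (1 / 2 : ℝ) • X) := by
  have hSN : ∀ X ∈ n4, ∀ Y ∈ n4, SN X Y = 0 := fun X hX Y hY =>
    SN_eq_zero hSNmem hSNimp hX hY
  have hRic : ∀ X ∈ n4, RicN X = (1 / 2 : ℝ) • X := fun X hX =>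
    RicN_eq_half_smul hSN hRicNmem hRicNchar hX
  have hscal : (1 / 8) * (∑ i, Q4 (P4 l1⁻¹ l2⁻¹ (RicN (bN4 i))) (bN4 i)) = 1 / l1 + 1 / l2 := by
    simp only [hRic _ (bN4_mem _), P4_smul, Q4_smul_left, ← mul_sum, sum_Q4_P4_bN4]
    ring
  refine ⟨hscal, ?_, fun _ _ => hRic⟩
  rw [hscal, ← Real.rpow_natCast, ← Real.rpow_mul (mul_pos h1 h2).le]
  norm_num
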